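/- In the Mixed Logit setting — J ≥ 1, K ≥ 1, θ ∈ ℝ^J with θ₀ = 0, choice probabilities f(j,x,α) = exp(θ_j + ⟨x_j,α⟩)/(1 + Σ_{k=1}^J exp(θ_k + ⟨x_k,α⟩)) for j ∈ {1,…,J} and f(0,x,α) the outside-good probability, and ν a finite measure on (ℝ^K)^J — let N ⊆ ℝ^K be open, α₀ ∈ N, and let η₀ be a measure on ℝ^K with η₀(U) > 0 for every nonempty open U ⊆ N. Then there is no pair (s, c) of a function s : {0,…,J} × (ℝ^K)^J → ℝ with ∫|s(j,x)| dν(x) < ∞ for each j and a constant c ∈ ℝ such that Σ_{j=0}^{J} ∫ f(j,x,α) s(j,x) dν(x) = 1(α ≤ α₀) − c for η₀-a.e. α ∈ N, where α ≤ α₀ means componentwise inequality. -/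

import Mathlib

/-!
Each term `α ↦ ∫ f(j,x,α) s(j,x) dν(x)` is continuous in `α`, since the choice probabilities are
continuous and bounded by `1` and `s(j,·)` is integrable (dominated convergence). As `η₀` charges
every nonempty open subset of `N`, the a.e. identity holds at points of any such set; near `α₀`
there are such sets where the indicator is `1` (the open lower orthant) and where it is `0`
(a half-space `α₀ i < α i`). Continuity of the left side at `α₀` then forces `1 - c = -c`.
-/

open MeasureTheory Set Filter Topology
open scoped RealInnerProductSpace BigOperators

/-- Mixed Logit choice probabilities with `J` inside goods (intercepts `θ`, with the
outside-good intercept normalized to `0`). -/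
noncomputable def logitProb {J K : ℕ} (θ : Fin J → ℝ)
    (x : Fin J → EuclideanSpace ℝ (Fin K)) (α : EuclideanSpace ℝ (Fin K)) :
    Fin (J + 1) → ℝ :=
  Fin.cases
    (1 / (1 + ∑ k : Fin J, Real.exp (θ k + ⟪x k, α⟫)))
    (fun j => Real.exp (θ j + ⟪x j, α⟫) / (1 + ∑ k : Fin J, Real.exp (θ k + ⟪x k, α⟫)))

section LogitProb

variable {J K : ℕ} (θ : Fin J → ℝ)

lemma logitProb_nonneg (x : Fin J → EuclideanSpace ℝ (Fin K)) (α : EuclideanSpace ℝ (Fin K))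
    (j : Fin (J + 1)) : 0 ≤ logitProb θ x α j := by
  cases j using Fin.cases <;> simp only [logitProb, Fin.cases_zero, Fin.cases_succ] <;> positivity

lemma logitProb_le_one (x : Fin J → EuclideanSpace ℝ (Fin K)) (α : EuclideanSpace ℝ (Fin K))
    (j : Fin (J + 1)) : logitProb θ x α j ≤ 1 := by
  have hsum : 0 ≤ ∑ k : Fin J, Real.exp (θ k + ⟪x k, α⟫) := by positivity
  cases j using Fin.cases with
  | zero =>
    rw [logitProb, Fin.cases_zero, div_le_one (by positivity)]
    linarith
  | succ j =>
    rw [logitProb, Fin.cases_succ, div_le_one (by positivity)]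
    have := Finset.single_le_sum (f := fun k => Real.exp (θ k + ⟪x k, α⟫))
      (fun k _ => (Real.exp_pos _).le) (Finset.mem_univ j)
    linarith

lemma continuous_logitProb (j : Fin (J + 1)) :
    Continuous fun p : (Fin J → EuclideanSpace ℝ (Fin K)) × EuclideanSpace ℝ (Fin K) =>
      logitProb θ p.1 p.2 j := by
  have hden : ∀ p : (Fin J → EuclideanSpace ℝ (Fin K)) × EuclideanSpace ℝ (Fin K),
      1 + ∑ k : Fin J, Real.exp (θ k + ⟪p.1 k, p.2⟫) ≠ 0 := fun p => by positivity
  cases j using Fin.cases <;> simp only [logitProb, Fin.cases_zero, Fin.cases_succ] <;>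
    fun_prop (disch := exact hden _)

end LogitProb

lemma continuous_integral_mul_of_abs_le_one {X Y : Type*} [MeasurableSpace X]
    [TopologicalSpace X] [OpensMeasurableSpace X] [TopologicalSpace Y]
    [FirstCountableTopology Y] {μ : Measure X}
    {f : X → Y → ℝ} (hf : Continuous (Function.uncurry f)) (hf_le : ∀ x y, |f x y| ≤ 1)
    {g : X → ℝ} (hg : Integrable g μ) :
    Continuous fun y => ∫ x, f x y * g x ∂μ := by
  refine continuous_of_dominated (bound := fun x => |g x|) (fun y => ?_) (fun y => ?_) hg.abs
    (ae_of_all _ fun x => (hf.uncurry_left x).mul continuous_const)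
  · exact (hf.uncurry_right y).aestronglyMeasurable.mul hg.1
  · refine ae_of_all _ fun x => ?_
    rw [Real.norm_eq_abs, abs_mul]
    exact mul_le_of_le_one_left (abs_nonneg _) (hf_le x y)

section Support

variable {E : Type*} [TopologicalSpace E] [MeasurableSpace E] {η : Measure E} {N : Set E}
  {P : E → Prop}

lemma exists_of_ae_of_forall_isOpen_pos
    (hη : ∀ U : Set E, IsOpen U → U.Nonempty → U ⊆ N → 0 < η U)
    (hP : ∀ᵐ α ∂η, α ∈ N → P α) {U : Set E} (hU : IsOpen U) (hUne : U.Nonempty) (hUN : U ⊆ N) :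
    ∃ α ∈ U, P α := by
  by_contra! h
  have hnull : η U = 0 :=
    measure_mono_null (fun α hα (hPα : α ∈ N → P α) => h α hα (hPα (hUN hα))) (ae_iff.mp hP)
  exact (hη U hU hUne hUN).ne' hnull

lemma frequently_mem_and_of_ae_of_forall_isOpen_pos
    (hη : ∀ U : Set E, IsOpen U → U.Nonempty → U ⊆ N → 0 < η U)
    (hP : ∀ᵐ α ∂η, α ∈ N → P α) (hN : IsOpen N) {α₀ : E} (hα₀ : α₀ ∈ N) {V : Set E}
    (hV : IsOpen V) (hα₀V : α₀ ∈ closure V) :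
    ∃ᶠ α in 𝓝 α₀, α ∈ V ∧ P α := by
  refine Filter.frequently_iff.mpr fun {W} hW => ?_
  have hWN : IsOpen (interior W ∩ N) := isOpen_interior.inter hN
  obtain ⟨α, ⟨⟨hαW, -⟩, hαV⟩, hPα⟩ := exists_of_ae_of_forall_isOpen_pos hη hP (hWN.inter hV)
    (mem_closure_iff.mp hα₀V _ hWN ⟨mem_interior_iff_mem_nhds.mpr hW, hα₀⟩)
    (inter_subset_left.trans inter_subset_right)
  exact ⟨α, interior_subset hαW, hαV, hPα⟩

end Support

section Orthant

variable {ι : Type*} (α₀ : EuclideanSpace ℝ ι)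

lemma isOpen_setOf_lt_apply (i : ι) : IsOpen {α : EuclideanSpace ℝ ι | α₀ i < α i} :=
  isOpen_lt continuous_const (by fun_prop)

variable [Fintype ι]

lemma tendsto_add_smul_const_one :
    Tendsto (fun t : ℝ => α₀ + t • WithLp.toLp 2 (fun _ : ι => (1 : ℝ))) (𝓝 0) (𝓝 α₀) := by
  have h : Continuous fun t : ℝ => α₀ + t • WithLp.toLp 2 (fun _ : ι => (1 : ℝ)) := by fun_prop
  simpa using h.tendsto 0

lemma isOpen_setOf_forall_lt : IsOpen {α : EuclideanSpace ℝ ι | ∀ i, α i < α₀ i} := by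
  rw [ofPred_forall]
  exact isOpen_iInter_of_finite fun i => isOpen_lt (by fun_prop) continuous_const

lemma self_mem_closure_setOf_forall_lt : α₀ ∈ closure {α | ∀ i, α i < α₀ i} := by
  refine mem_closure_of_tendsto ((tendsto_add_smul_const_one α₀).mono_left
    (nhdsWithin_le_nhds (s := Iio 0))) (eventually_nhdsWithin_of_forall fun t (ht : t < 0) i => ?_)
  simpa using ht

lemma self_mem_closure_setOf_lt_apply (i : ι) : α₀ ∈ closure {α | α₀ i < α i} := by
  refine mem_closure_of_tendsto ((tendsto_add_smul_const_one α₀).mono_left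
    (nhdsWithin_le_nhds (s := Ioi 0))) (eventually_nhdsWithin_of_forall fun t (ht : 0 < t) => ?_)
  simpa using ht

end Orthant

theorem stmt_13_general {J K : ℕ} (hK : 1 ≤ K) (θ : Fin J → ℝ)
    (ν : Measure (Fin J → EuclideanSpace ℝ (Fin K)))
    (N : Set (EuclideanSpace ℝ (Fin K))) (hN : IsOpen N)
    (α₀ : EuclideanSpace ℝ (Fin K)) (hα₀ : α₀ ∈ N)
    (η₀ : Measure (EuclideanSpace ℝ (Fin K)))
    (hη : ∀ U : Set (EuclideanSpace ℝ (Fin K)), IsOpen U → U.Nonempty → U ⊆ N → 0 < η₀ U) :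
    ¬ ∃ (s : Fin (J + 1) → (Fin J → EuclideanSpace ℝ (Fin K)) → ℝ) (c : ℝ),
      (∀ j, Integrable (s j) ν) ∧
      ∀ᵐ α ∂η₀, α ∈ N →
        (∑ j : Fin (J + 1), ∫ x, logitProb θ x α j * s j x ∂ν) =
          (if ∀ i, α i ≤ α₀ i then (1 : ℝ) else 0) - c := by
  rintro ⟨s, c, hs, hae⟩
  set F := fun α => ∑ j : Fin (J + 1), ∫ x, logitProb θ x α j * s j x ∂ν
  have hF : Continuous F := continuous_finsetSum _ fun j _ =>
    continuous_integral_mul_of_abs_le_one (continuous_logitProb θ j)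
      (fun x α => abs_le.mpr ⟨by linarith [logitProb_nonneg θ x α j], logitProb_le_one θ x α j⟩)
      (hs j)
  have hF_eq (V : Set (EuclideanSpace ℝ (Fin K))) (hV : IsOpen V) (hα₀V : α₀ ∈ closure V) :
      ∃ᶠ α in 𝓝 α₀, α ∈ V ∧ F α = (if ∀ i, α i ≤ α₀ i then (1 : ℝ) else 0) - c :=
    frequently_mem_and_of_ae_of_forall_isOpen_pos hη hae hN hα₀ hV hα₀V
  have hlower : F α₀ = 1 - c := by
    refine tendsto_nhds_unique_of_frequently_eq hF.continuousAt tendsto_const_nhds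
      ((hF_eq _ (isOpen_setOf_forall_lt α₀) (self_mem_closure_setOf_forall_lt α₀)).mono
        fun α ⟨hlt, hα⟩ => ?_)
    rw [hα, if_pos fun i => (hlt i).le]
  let i₀ : Fin K := ⟨0, hK⟩
  have hupper : F α₀ = 0 - c := by
    refine tendsto_nhds_unique_of_frequently_eq hF.continuousAt tendsto_const_nhds
      ((hF_eq _ (isOpen_setOf_lt_apply α₀ i₀) (self_mem_closure_setOf_lt_apply α₀ i₀)).mono
        fun α ⟨hlt, hα⟩ => ?_)
    rw [hα, if_neg fun h => (h i₀).not_gt hlt]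
  linarith

/-- irregular identification of the CDF of the random coefficient
distribution in the Mixed Logit model: the necessary representation
`Σ_{j=0}^J ∫ f(j,x,α)s(j,x)dν(x) = 1(α ≤ α₀) − c` (η₀-a.e. on `N`) is impossible. -/
theorem stmt_13 {J K : ℕ} (hJ : 1 ≤ J) (hK : 1 ≤ K) (θ : Fin J → ℝ)
    (ν : Measure (Fin J → EuclideanSpace ℝ (Fin K))) [IsFiniteMeasure ν]
    (N : Set (EuclideanSpace ℝ (Fin K))) (hN : IsOpen N)
    (α₀ : EuclideanSpace ℝ (Fin K)) (hα₀ : α₀ ∈ N)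
    (η₀ : Measure (EuclideanSpace ℝ (Fin K)))
    (hη : ∀ U : Set (EuclideanSpace ℝ (Fin K)), IsOpen U → U.Nonempty → U ⊆ N → 0 < η₀ U) :
    ¬ ∃ (s : Fin (J + 1) → (Fin J → EuclideanSpace ℝ (Fin K)) → ℝ) (c : ℝ),
      (∀ j, Integrable (s j) ν) ∧
      ∀ᵐ α ∂η₀, α ∈ N →
        (∑ j : Fin (J + 1), ∫ x, logitProb θ x α j * s j x ∂ν) =
          (if ∀ i, α i ≤ α₀ i then (1 : ℝ) else 0) - c :=
  stmt_13_general hK θ ν N hN α₀ hα₀ η₀ hη
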